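/- arXiv:2402.02748 — 2 statements merged into one kernel-verified Lean document; each statement's English description precedes it below -/
import Mathlib

section
/- If ζ ∈ ℂ satisfies ζ² + (4/3)ζ + 1 = 0, then ζ is not a root of unity. -/
/-!
If `ζ ^ n = 1`, then `ζ` and `ζ⁻¹ = ζ ^ (n - 1)` are algebraic integers, hence so is `ζ + ζ⁻¹`.
Dividing `ζ² + (4/3)ζ + 1 = 0` by `ζ` gives `ζ + ζ⁻¹ = -4/3`, a rational number that is not an
integer, whereas `ℤ` is integrally closed.
-/

theorem isIntegral_add_inv_of_pow_eq_one {K : Type*} [Field K] {ζ : K} {n : ℕ} (hn : 0 < n)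
    (hζ : ζ ^ n = 1) : IsIntegral ℤ (ζ + ζ⁻¹) := by
  have hint : IsIntegral ℤ ζ := IsIntegral.of_pow hn (hζ ▸ isIntegral_one)
  have hinv : ζ⁻¹ = ζ ^ (n - 1) :=
    inv_eq_of_mul_eq_one_right (by rw [← pow_succ', Nat.sub_add_cancel hn, hζ])
  rw [hinv]
  exact hint.add (hint.pow _)

theorem exists_int_eq_of_isIntegral_ratCast {K : Type*} [Field K] [CharZero K] {q : ℚ}
    (hq : IsIntegral ℤ (q : K)) : ∃ z : ℤ, (z : ℚ) = q := by
  rw [← eq_ratCast (algebraMap ℚ K), isIntegral_algebraMap_iff (algebraMap ℚ K).injective] at hq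
  exact IsIntegrallyClosed.isIntegral_iff.mp hq

/-- A root of `λ² + (4/3)λ + 1` is not a root of unity. -/
theorem not_root_of_unity_7 (ζ : ℂ) (h : ζ ^ 2 + (4/3) * ζ + 1 = 0) :
    ∀ n : ℕ, 0 < n → ζ ^ n ≠ 1 := by
  intro n hn hζn
  have hζ : ζ ≠ 0 := by rintro rfl; norm_num at h
  have hsum : ζ + ζ⁻¹ = ((-4 / 3 : ℚ) : ℂ) := by
    push_cast
    field_simp
    linear_combination 3 * h
  obtain ⟨z, hz⟩ := exists_int_eq_of_isIntegral_ratCast (K := ℂ)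
    (hsum ▸ isIntegral_add_inv_of_pow_eq_one hn hζn)
  have h3z : (3 * z : ℚ) = -4 := by rw [hz]; norm_num
  norm_cast at h3z
  omega
end

section
/- If ζ ∈ ℂ is a root of the polynomial λ⁴ + 2λ³ + (5/2)λ² + 2λ + 1, then ζ is not a root of unity. -/
/-!
Put `w = ζ + ζ⁻¹`. Dividing the palindromic equation by `ζ²` gives `w² + 2w + 1/2 = 0`,
so `1/2 = -w(w + 2)`. If `ζⁿ = 1`, then `ζ` and `ζ⁻¹` are algebraic integers, hence so is
`-w(w + 2)`; but `1/2` is not an algebraic integer.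
-/

theorem isIntegral_of_pow_eq_one {R A : Type*} [CommRing R] [Ring A] [Algebra R A]
    {x : A} {n : ℕ} (hn : 0 < n) (h : x ^ n = 1) : IsIntegral R x :=
  IsIntegral.of_pow hn (h ▸ isIntegral_one)

theorem not_isIntegral_int_inv_two (K : Type*) [Field K] [CharZero K] :
    ¬ IsIntegral ℤ (2⁻¹ : K) := by
  have h2 : (2⁻¹ : K) = algebraMap ℚ K 2⁻¹ := by simp
  rw [h2, isIntegral_algebraMap_iff (algebraMap ℚ K).injective, IsIntegrallyClosed.isIntegral_iff]
  rintro ⟨m, hm⟩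
  have h2m : ((2 * m : ℤ) : ℚ) = 1 := by push_cast [eq_intCast] at hm ⊢; rw [hm]; norm_num
  have : 2 * m = 1 := by exact_mod_cast h2m
  omega

theorem inv_two_eq_of_root {K : Type*} [Field K] [CharZero K] {ζ : K} (hζ : ζ ≠ 0)
    (h : ζ ^ 4 + 2 * ζ ^ 3 + 5 / 2 * ζ ^ 2 + 2 * ζ + 1 = 0) :
    (2⁻¹ : K) = -((ζ + ζ⁻¹) * (ζ + ζ⁻¹ + 2)) := by
  field_simp
  linear_combination 2 * h

/-- A root of `λ⁴ + (2)λ³ + (5/2)λ² + (2)λ + 1` is not a root of unity. -/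
theorem not_root_of_unity_11 (ζ : ℂ)
    (h : ζ ^ 4 + (2) * ζ ^ 3 + (5/2) * ζ ^ 2 + (2) * ζ + 1 = 0) :
    ∀ n : ℕ, 0 < n → ζ ^ n ≠ 1 := by
  intro n hn hζn
  have hζ0 : ζ ≠ 0 := by
    rintro rfl
    simp [hn.ne'] at hζn
  have hζ : IsIntegral ℤ ζ := isIntegral_of_pow_eq_one hn hζn
  have hζinv : IsIntegral ℤ ζ⁻¹ := isIntegral_of_pow_eq_one hn (by rw [inv_pow, hζn, inv_one])
  have hw : IsIntegral ℤ (ζ + ζ⁻¹) := hζ.add hζinv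
  apply not_isIntegral_int_inv_two ℂ
  rw [inv_two_eq_of_root hζ0 h]
  exact (hw.mul (hw.add (by simpa using isIntegral_natCast (R := ℤ) (B := ℂ) 2))).neg
end
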